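/- arXiv:1203.3313 — 4 statements merged into one kernel-verified Lean document; each statement's English description precedes it below -/
import Mathlib

section
/- Let F be a family of Borel functions f : ℝ^s → ℝ such that f∘Y is P-integrable for every f ∈ F. Assume the central subspace S_{Y|X} is itself a dimension reduction subspace. Then the linear span of the union of the central mean subspaces, span{ S_{E[f(Y)|X]} : f ∈ F } (the supremum of these subspaces in the lattice of subspaces of ℝ^p), is contained in the central subspace S_{Y|X}. (Lemma 1, part 1.) -/
/-!
A dimension reduction subspace `S` gives `Y ⫫ X | σ(P_S ∘ X)` with `σ(P_S ∘ X) ≤ σ(X)`.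
Whenever `σ(Y) ⫫ σ(X)` given some `m' ≤ σ(X)`, conditioning a function of `Y` on `σ(X)` or
on `m'` gives the same result: for an indicator of an event of `σ(Y)`, both have the same
integral over every event of `σ(X)` by the product formula of conditional independence, and
linearity and `L¹`-continuity of the conditional expectation do the rest. So every dimension
reduction subspace is a mean dimension reduction subspace for every measurable `f`, and if
`S_{Y|X}` is a dimension reduction subspace it contains every `S_{E[f(Y)|X]}`.
-/

open MeasureTheory ProbabilityTheory Filter

/-- The map `x ↦ P_S x`, the orthogonal projection onto `S` viewed as a map of the
ambient Euclidean space. -/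
noncomputable def projFn {p : ℕ} (S : Submodule ℝ (EuclideanSpace ℝ (Fin p))) :
    EuclideanSpace ℝ (Fin p) → EuclideanSpace ℝ (Fin p) :=
  fun v => (S.orthogonalProjection v : EuclideanSpace ℝ (Fin p))

/-- The σ-algebra `σ(P_S ∘ X)` generated by the projected random vector. -/
noncomputable def sigmaProj {Ω : Type*} {p : ℕ}
    (S : Submodule ℝ (EuclideanSpace ℝ (Fin p))) (X : Ω → EuclideanSpace ℝ (Fin p)) :
    MeasurableSpace Ω :=
  MeasurableSpace.comap (fun ω => projFn S (X ω)) inferInstance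

lemma sigmaProj_le {Ω : Type*} {p : ℕ} [mΩ : MeasurableSpace Ω]
    (S : Submodule ℝ (EuclideanSpace ℝ (Fin p))) {X : Ω → EuclideanSpace ℝ (Fin p)}
    (hX : Measurable X) : sigmaProj S X ≤ mΩ := by
  have h : Measurable (fun ω => projFn S (X ω)) := by
    have : Measurable (projFn S) :=
      (S.subtypeL.comp S.orthogonalProjection).continuous.measurable
    exact this.comp hX
  exact h.comap_le

/-- `S` is a dimension reduction subspace: `Y ⫫ X | σ(P_S ∘ X)`. -/
def IsDRS {Ω : Type*} {p s : ℕ} [mΩ : MeasurableSpace Ω] [StandardBorelSpace Ω]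
    (P : Measure Ω) [IsFiniteMeasure P]
    (X : Ω → EuclideanSpace ℝ (Fin p)) (Y : Ω → EuclideanSpace ℝ (Fin s))
    (hX : Measurable X) (S : Submodule ℝ (EuclideanSpace ℝ (Fin p))) : Prop :=
  CondIndep (sigmaProj S X) (MeasurableSpace.comap Y inferInstance)
    (MeasurableSpace.comap X inferInstance) (sigmaProj_le S hX) P

/-- The central subspace `S_{Y|X}`: the intersection of all dimension reduction subspaces. -/
noncomputable def centralSubspace {Ω : Type*} {p s : ℕ} [mΩ : MeasurableSpace Ω]
    [StandardBorelSpace Ω] (P : Measure Ω) [IsFiniteMeasure P]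
    (X : Ω → EuclideanSpace ℝ (Fin p)) (Y : Ω → EuclideanSpace ℝ (Fin s))
    (hX : Measurable X) : Submodule ℝ (EuclideanSpace ℝ (Fin p)) :=
  sInf {S | IsDRS P X Y hX S}

/-- `S` is a mean dimension reduction subspace for `f`:
`E[f(Y) | σ(X)] = E[f(Y) | σ(P_S ∘ X)]` a.e. -/
def IsMeanDRS {Ω : Type*} {p s : ℕ} [mΩ : MeasurableSpace Ω] (P : Measure Ω)
    (X : Ω → EuclideanSpace ℝ (Fin p)) (Y : Ω → EuclideanSpace ℝ (Fin s))
    (f : EuclideanSpace ℝ (Fin s) → ℝ) (S : Submodule ℝ (EuclideanSpace ℝ (Fin p))) : Prop :=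
  P[(fun ω => f (Y ω))|MeasurableSpace.comap X inferInstance]
    =ᵐ[P] P[(fun ω => f (Y ω))|sigmaProj S X]

/-- The central mean subspace `S_{E[f(Y)|X]}`: the intersection of all mean dimension
reduction subspaces for `f`. -/
noncomputable def centralMeanSubspace {Ω : Type*} {p s : ℕ} [mΩ : MeasurableSpace Ω]
    (P : Measure Ω) (X : Ω → EuclideanSpace ℝ (Fin p)) (Y : Ω → EuclideanSpace ℝ (Fin s))
    (f : EuclideanSpace ℝ (Fin s) → ℝ) : Submodule ℝ (EuclideanSpace ℝ (Fin p)) :=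
  sInf {S | IsMeanDRS P X Y f S}

namespace MeasureTheory

lemma isClosed_setOf_condExp_ae_eq {Ω E : Type*} [NormedAddCommGroup E] [NormedSpace ℝ E]
    [CompleteSpace E] {m₂ m' mΩ : MeasurableSpace Ω} {μ : Measure Ω} [IsFiniteMeasure μ]
    (hm₂ : m₂ ≤ mΩ) (hm' : m' ≤ mΩ) :
    IsClosed {f : Lp E 1 μ | μ[f | m₂] =ᵐ[μ] μ[f | m']} := by
  have h_eq : ∀ (m : MeasurableSpace Ω) (hm : m ≤ mΩ) (f : Lp E 1 μ),
      μ[f | m] =ᵐ[μ] condExpL1CLM E hm μ f := fun m hm f => by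
    simpa only [Integrable.toL1_coeFn] using
      condExp_ae_eq_condExpL1CLM hm (L1.integrable_coeFn f)
  have h_set : {f : Lp E 1 μ | μ[f | m₂] =ᵐ[μ] μ[f | m']} =
      {f | condExpL1CLM E hm₂ μ f = condExpL1CLM E hm' μ f} := by
    ext f
    rw [Set.mem_ofPred_eq, Set.mem_ofPred_eq, Lp.ext_iff]
    exact ⟨fun h => (h_eq m₂ hm₂ f).symm.trans (h.trans (h_eq m' hm' f)),
      fun h => (h_eq m₂ hm₂ f).trans (h.trans (h_eq m' hm' f).symm)⟩
  rw [h_set]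
  exact isClosed_eq (condExpL1CLM E hm₂ μ).continuous (condExpL1CLM E hm' μ).continuous

end MeasureTheory

namespace ProbabilityTheory

variable {Ω : Type*} {m' m₁ m₂ mΩ : MeasurableSpace Ω} [StandardBorelSpace Ω]
  {μ : Measure Ω} [IsFiniteMeasure μ] {hm' : m' ≤ mΩ}

lemma CondIndep.setIntegral_condExp_indicator (hm₁ : m₁ ≤ mΩ) (hm₂ : m₂ ≤ mΩ)
    (h : CondIndep m' m₁ m₂ hm' μ) {t s : Set Ω} (ht : MeasurableSet[m₁] t)
    (hs : MeasurableSet[m₂] s) :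
    ∫ ω in s, (μ⟦t | m'⟧) ω ∂μ = μ.real (t ∩ s) := by
  have hs_int : Integrable (s.indicator fun _ => (1 : ℝ)) μ :=
    (integrable_const 1).indicator (hm₂ s hs)
  have h_mul : μ⟦t | m'⟧ * s.indicator (fun _ => (1 : ℝ)) = s.indicator (μ⟦t | m'⟧) := by
    ext ω; by_cases hω : ω ∈ s <;> simp [hω]
  calc ∫ ω in s, (μ⟦t | m'⟧) ω ∂μ
      = ∫ ω, (μ⟦t | m'⟧ * s.indicator fun _ => (1 : ℝ)) ω ∂μ := by
        rw [h_mul, integral_indicator (hm₂ s hs)]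
    _ = ∫ ω, (μ[μ⟦t | m'⟧ * s.indicator fun _ => (1 : ℝ) | m']) ω ∂μ :=
        (integral_condExp hm').symm
    _ = ∫ ω, (μ⟦t | m'⟧ * μ⟦s | m'⟧) ω ∂μ := by
        refine integral_congr_ae (condExp_mul_of_stronglyMeasurable_left
          stronglyMeasurable_condExp ?_ hs_int)
        rw [h_mul]
        exact integrable_condExp.indicator (hm₂ s hs)
    _ = ∫ ω, (μ⟦t ∩ s | m'⟧) ω ∂μ :=
        integral_congr_ae ((condIndep_iff m' m₁ m₂ hm' hm₁ hm₂ μ).1 h t s ht hs).symm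
    _ = μ.real (t ∩ s) := by
        rw [integral_condExp hm']
        exact integral_indicator_one ((hm₁ t ht).inter (hm₂ s hs))

lemma CondIndep.condExp_indicator_ae_eq_of_le (hm₁ : m₁ ≤ mΩ) (hm₂ : m₂ ≤ mΩ)
    (hm'₂ : m' ≤ m₂) (h : CondIndep m' m₁ m₂ hm' μ) {t : Set Ω} (ht : MeasurableSet[m₁] t) :
    μ⟦t | m₂⟧ =ᵐ[μ] μ⟦t | m'⟧ := by
  refine (ae_eq_condExp_of_forall_setIntegral_eq hm₂
    ((integrable_const 1).indicator (hm₁ t ht)) (fun _ _ _ => integrable_condExp.integrableOn)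
    (fun s hs _ => ?_) (stronglyMeasurable_condExp.mono hm'₂).aestronglyMeasurable).symm
  rw [h.setIntegral_condExp_indicator hm₁ hm₂ ht hs, setIntegral_indicator (hm₁ t ht),
    setIntegral_const, smul_eq_mul, mul_one, Set.inter_comm, measureReal_def]

lemma CondIndep.condExp_ae_eq_of_le {E : Type*} [NormedAddCommGroup E] [NormedSpace ℝ E]
    [CompleteSpace E] (hm₁ : m₁ ≤ mΩ) (hm₂ : m₂ ≤ mΩ) (hm'₂ : m' ≤ m₂)
    (h : CondIndep m' m₁ m₂ hm' μ) {g : Ω → E} (hg : StronglyMeasurable[m₁] g) :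
    μ[g | m₂] =ᵐ[μ] μ[g | m'] := by
  by_cases hg_int : Integrable g μ
  swap
  · rw [condExp_of_not_integrable hg_int, condExp_of_not_integrable hg_int]
  rw [← memLp_one_iff_integrable] at hg_int
  refine MemLp.induction_stronglyMeasurable hm₁ ENNReal.one_ne_top
    (fun g => μ[g | m₂] =ᵐ[μ] μ[g | m']) ?_ ?_ ?_ ?_ hg_int hg.aestronglyMeasurable
  · intro c t ht _
    have h_ind : Integrable (t.indicator fun _ => (1 : ℝ)) μ :=
      (integrable_const 1).indicator (hm₁ t ht)
    have h_smul : t.indicator (fun _ => c) = (t.indicator fun _ => (1 : ℝ)) • fun _ => c := by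
      ext ω; by_cases hω : ω ∈ t <;> simp [hω]
    have h_int : Integrable ((t.indicator fun _ => (1 : ℝ)) • fun _ => c) μ :=
      h_smul ▸ (integrable_const c).indicator (hm₁ t ht)
    rw [h_smul]
    calc μ[(t.indicator fun _ => (1 : ℝ)) • fun _ => c | m₂]
        =ᵐ[μ] μ⟦t | m₂⟧ • fun _ => c :=
          condExp_smul_of_aestronglyMeasurable_right h_ind h_int aestronglyMeasurable_const
      _ =ᵐ[μ] μ⟦t | m'⟧ • fun _ => c :=
          (h.condExp_indicator_ae_eq_of_le hm₁ hm₂ hm'₂ ht).smul EventuallyEq.rfl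
      _ =ᵐ[μ] μ[(t.indicator fun _ => (1 : ℝ)) • fun _ => c | m'] :=
          (condExp_smul_of_aestronglyMeasurable_right h_ind h_int aestronglyMeasurable_const).symm
  · intro u v _ hu hv _ _ hu_eq hv_eq
    rw [memLp_one_iff_integrable] at hu hv
    exact (condExp_add hu hv m₂).trans ((hu_eq.add hv_eq).trans (condExp_add hu hv m').symm)
  · exact (isClosed_setOf_condExp_ae_eq hm₂ hm').preimage continuous_subtype_val
  · intro u v huv _ hu_eq
    exact (condExp_congr_ae huv).symm.trans (hu_eq.trans (condExp_congr_ae huv))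

end ProbabilityTheory

lemma continuous_projFn {p : ℕ} (S : Submodule ℝ (EuclideanSpace ℝ (Fin p))) :
    Continuous (projFn S) :=
  (S.subtypeL.comp S.orthogonalProjectionOnto).continuous

lemma sigmaProj_le_comap {Ω : Type*} {p : ℕ} (S : Submodule ℝ (EuclideanSpace ℝ (Fin p)))
    (X : Ω → EuclideanSpace ℝ (Fin p)) :
    sigmaProj S X ≤ MeasurableSpace.comap X inferInstance :=
  ((continuous_projFn S).measurable.comp (comap_measurable X)).comap_le

lemma IsDRS.isMeanDRS {Ω : Type*} {p s : ℕ} [mΩ : MeasurableSpace Ω] [StandardBorelSpace Ω]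
    {P : Measure Ω} [IsFiniteMeasure P] {X : Ω → EuclideanSpace ℝ (Fin p)}
    {Y : Ω → EuclideanSpace ℝ (Fin s)} {hX : Measurable X}
    {S : Submodule ℝ (EuclideanSpace ℝ (Fin p))} (hS : IsDRS P X Y hX S) (hY : Measurable Y)
    {f : EuclideanSpace ℝ (Fin s) → ℝ} (hf : Measurable f) :
    IsMeanDRS P X Y f S :=
  CondIndep.condExp_ae_eq_of_le hY.comap_le hX.comap_le (sigmaProj_le_comap S X) hS
    (hf.comp (comap_measurable Y)).stronglyMeasurable

theorem span_centralMeanSubspaces_le_centralSubspace_general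
    {Ω : Type*} {p s : ℕ} [mΩ : MeasurableSpace Ω] [StandardBorelSpace Ω]
    (P : Measure Ω) [IsProbabilityMeasure P]
    (X : Ω → EuclideanSpace ℝ (Fin p)) (Y : Ω → EuclideanSpace ℝ (Fin s))
    (hX : Measurable X) (hY : Measurable Y)
    (F : Set (EuclideanSpace ℝ (Fin s) → ℝ))
    (hFmeas : ∀ f ∈ F, Measurable f)
    (hcentral : IsDRS P X Y hX (centralSubspace P X Y hX)) :
    (⨆ f ∈ F, centralMeanSubspace P X Y f) ≤ centralSubspace P X Y hX :=
  iSup₂_le fun f hf => sInf_le (hcentral.isMeanDRS hY (hFmeas f hf))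

/-- Lemma 1, part 1: if the central subspace is itself a dimension reduction subspace, then
the span of the central mean subspaces over a family `F` of integrable transformations of `Y`
is contained in the central subspace. -/
theorem span_centralMeanSubspaces_le_centralSubspace
    {Ω : Type*} {p s : ℕ} [mΩ : MeasurableSpace Ω] [StandardBorelSpace Ω]
    (P : Measure Ω) [IsProbabilityMeasure P]
    (X : Ω → EuclideanSpace ℝ (Fin p)) (Y : Ω → EuclideanSpace ℝ (Fin s))
    (hX : Measurable X) (hY : Measurable Y)
    (F : Set (EuclideanSpace ℝ (Fin s) → ℝ))
    (hFmeas : ∀ f ∈ F, Measurable f)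
    (hFint : ∀ f ∈ F, Integrable (fun ω => f (Y ω)) P)
    (hcentral : IsDRS P X Y hX (centralSubspace P X Y hX)) :
    (⨆ f ∈ F, centralMeanSubspace P X Y f) ≤ centralSubspace P X Y hX :=
  span_centralMeanSubspaces_le_centralSubspace_general (mΩ := mΩ) P X Y hX hY F hFmeas hcentral
end

section
/- Suppose there exist finitely many measurable sets Λ_1, …, Λ_d ⊆ 𝒯 with μ(Λ_u) < 1 for each u = 1, …, d, such that for every m ≥ 1 and every t_1, …, t_m ∈ 𝒯 with S(t_1) + ⋯ + S(t_m) ≠ S₀ there exists u ∈ {1, …, d} with t_i ∈ Λ_u for all i = 1, …, m. Then lim_{m→∞} P( S(T_1) + ⋯ + S(T_m) = S₀ ) = 1. -/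
open MeasureTheory ProbabilityTheory Filter Topology

/-! Union bound: off the event, all of `T_1, …, T_m` lie in a common `Λ_u`, which by
independence has probability `μ(Λ_u)ᵐ`; hence the failure probability is at most
`∑ᵤ μ(Λ_u)ᵐ → 0`. -/

lemma ProbabilityTheory.iIndepFun.measure_forall_mem_eq_pow {Ω 𝒯 : Type*} [MeasurableSpace Ω]
    [MeasurableSpace 𝒯] {P : Measure Ω} {μ : Measure 𝒯} {T : ℕ → Ω → 𝒯}
    (hindep : iIndepFun T P) (hTmeas : ∀ i, Measurable (T i))
    (hdist : ∀ i, P.map (T i) = μ) {A : Set 𝒯} (hA : MeasurableSet A) (m : ℕ) :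
    P {ω | ∀ i : Fin m, T i ω ∈ A} = μ A ^ m := by
  have hrestr : iIndepFun (fun i : Fin m => T i) P := hindep.precomp Fin.val_injective
  have hpre : ∀ i, P (T i ⁻¹' A) = μ A := fun i => by
    rw [← hdist i, Measure.map_apply (hTmeas i) hA]
  calc P {ω | ∀ i : Fin m, T i ω ∈ A} = P (⋂ i : Fin m, T i ⁻¹' A) := by
        congr 1; ext; simp
    _ = ∏ i : Fin m, P (T i ⁻¹' A) := hrestr.meas_iInter fun i => ⟨A, hA, rfl⟩
    _ = μ A ^ m := by simp [hpre]

lemma MeasureTheory.tendsto_measure_nhds_one_of_measure_compl_le {Ω : Type*} [MeasurableSpace Ω]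
    {P : Measure Ω} [IsProbabilityMeasure P] {s : ℕ → Set Ω} {ε : ℕ → ENNReal}
    (hε : Tendsto ε atTop (𝓝 0)) (hle : ∀ᶠ m in atTop, P (s m)ᶜ ≤ ε m) :
    Tendsto (fun m => P (s m)) atTop (𝓝 1) := by
  have hlower : Tendsto (fun m => 1 - ε m) atTop (𝓝 1) := by
    simpa using ENNReal.Tendsto.sub tendsto_const_nhds hε (Or.inl ENNReal.one_ne_top)
  refine tendsto_of_tendsto_of_tendsto_of_le_of_le' hlower tendsto_const_nhds ?_
    (.of_forall fun _ => prob_le_one)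
  filter_upwards [hle] with m hm
  calc 1 - ε m ≤ 1 - P (s m)ᶜ := tsub_le_tsub_left hm 1
    _ ≤ P (s m) := tsub_le_iff_right.2 <| by
        simpa using measure_univ_le_add_compl (μ := P) (s m)

theorem tendsto_prob_span_eq_general
    {Ω 𝒯 V : Type*} [MeasurableSpace Ω] [m𝒯 : MeasurableSpace 𝒯]
    [NormedAddCommGroup V] [InnerProductSpace ℝ V]
    (P : Measure Ω) [IsProbabilityMeasure P] (μ : Measure 𝒯)
    (T : ℕ → Ω → 𝒯) (hTmeas : ∀ i, Measurable (T i))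
    (hindep : iIndepFun (m := fun _ => m𝒯) T P)
    (hdist : ∀ i, P.map (T i) = μ)
    (S₀ : Submodule ℝ V) (S : 𝒯 → Submodule ℝ V)
    (d : ℕ) (Λ : Fin d → Set 𝒯) (hΛmeas : ∀ u, MeasurableSet (Λ u))
    (hΛμ : ∀ u, μ (Λ u) < 1)
    (hcover : ∀ m : ℕ, 1 ≤ m → ∀ t : Fin m → 𝒯, (⨆ i, S (t i)) ≠ S₀ →
      ∃ u, ∀ i, t i ∈ Λ u) :
    Filter.Tendsto (fun m : ℕ => P {ω | (⨆ i : Fin m, S (T i ω)) = S₀})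
      Filter.atTop (nhds 1) := by
  have hpow : Tendsto (fun m => ∑ u, μ (Λ u) ^ m) atTop (𝓝 0) := by
    simpa using tendsto_finsetSum Finset.univ fun u _ =>
      ENNReal.tendsto_pow_atTop_nhds_zero_of_lt_one (hΛμ u)
  refine tendsto_measure_nhds_one_of_measure_compl_le hpow
    (eventually_atTop.2 ⟨1, fun m hm => ?_⟩)
  have hbad :
      {ω | (⨆ i : Fin m, S (T i ω)) = S₀}ᶜ ⊆ ⋃ u, {ω | ∀ i : Fin m, T i ω ∈ Λ u} :=
    fun ω hω => Set.mem_iUnion.2 (hcover m hm (fun i => T i ω) hω)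
  calc _ ≤ ∑ u, P {ω | ∀ i : Fin m, T i ω ∈ Λ u} :=
        (measure_mono hbad).trans (measure_iUnion_fintype_le _ _)
    _ = ∑ u, μ (Λ u) ^ m := by
        simp only [hindep.measure_forall_mem_eq_pow hTmeas hdist (hΛmeas _)]

/-- If, whenever finitely many subspaces `S(t_1), …, S(t_m)` fail to span `S₀`, all of
`t_1, …, t_m` lie in one of finitely many sets `Λ_u` of measure less than one, then
`P(S(T_1) + ⋯ + S(T_m) = S₀) → 1` as `m → ∞`. -/
theorem tendsto_prob_span_eq
    {Ω 𝒯 V : Type*} [MeasurableSpace Ω] [m𝒯 : MeasurableSpace 𝒯]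
    [NormedAddCommGroup V] [InnerProductSpace ℝ V] [FiniteDimensional ℝ V]
    (P : Measure Ω) [IsProbabilityMeasure P] (μ : Measure 𝒯)
    (T : ℕ → Ω → 𝒯) (hTmeas : ∀ i, Measurable (T i))
    (hindep : iIndepFun (m := fun _ => m𝒯) T P)
    (hdist : ∀ i, P.map (T i) = μ)
    (S₀ : Submodule ℝ V) (S : 𝒯 → Submodule ℝ V) (hS : ∀ t, S t ≤ S₀)
    (d : ℕ) (Λ : Fin d → Set 𝒯) (hΛmeas : ∀ u, MeasurableSet (Λ u))
    (hΛμ : ∀ u, μ (Λ u) < 1)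
    (hcover : ∀ m : ℕ, 1 ≤ m → ∀ t : Fin m → 𝒯, (⨆ i, S (t i)) ≠ S₀ →
      ∃ u, ∀ i, t i ∈ Λ u) :
    Filter.Tendsto (fun m : ℕ => P {ω | (⨆ i : Fin m, S (T i ω)) = S₀})
      Filter.atTop (nhds 1) :=
  tendsto_prob_span_eq_general (m𝒯 := m𝒯) P μ T hTmeas hindep hdist S₀ S d Λ hΛmeas hΛμ hcover
end

section
/- Let m be a sub-σ-algebra of 𝒜 with m ⊆ σ(X). If for every Borel set B ⊆ ℝ^s one has E[1_B∘Y | σ(X)] = E[1_B∘Y | m] P-almost everywhere, then Y and X are conditionally independent given m. -/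
/-!
Let `𝒢 = σ(X)` and `t ∈ 𝒢`. Since `1_t` is `𝒢`-measurable and bounded, the tower property and
the pull-out property give `E[1_{Y ∈ B} 1_t | m] = E[1_t E[1_{Y ∈ B} | 𝒢] | m]`. The hypothesis
replaces `E[1_{Y ∈ B} | 𝒢]` by the `m`-measurable `E[1_{Y ∈ B} | m]`, which pulls out of the
outer conditional expectation and leaves `E[1_{Y ∈ B} | m] E[1_t | m]`.
-/

open MeasureTheory ProbabilityTheory

namespace MeasureTheory

variable {Ω : Type*} {m m₂ mΩ : MeasurableSpace Ω} {μ : Measure Ω} [IsFiniteMeasure μ]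

theorem condExp_mul_ae_eq_mul_condExp_of_condExp_ae_eq (hm : m ≤ m₂) (hm₂ : m₂ ≤ mΩ)
    {f g : Ω → ℝ} (hf : Integrable f μ) (hf_cond : μ[f|m₂] =ᵐ[μ] μ[f|m])
    (hg : StronglyMeasurable[m₂] g) {C : ℝ} (hg_bound : ∀ᵐ ω ∂μ, ‖g ω‖ ≤ C) :
    μ[f * g|m] =ᵐ[μ] μ[f|m] * μ[g|m] := by
  have hg_int : Integrable g μ := .of_bound (hg.mono hm₂).aestronglyMeasurable C hg_bound
  have h_pull_inner : μ[f * g|m₂] =ᵐ[μ] μ[f|m] * g := by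
    rw [mul_comm f g]
    filter_upwards [condExp_stronglyMeasurable_mul_of_bound hm₂ hg hf C hg_bound, hf_cond]
      with ω h_pull h_eq
    rw [h_pull, Pi.mul_apply, h_eq, mul_comm]
    rfl
  have h_int : Integrable (μ[f|m] * g) μ :=
    integrable_condExp.mul_bdd (hg.mono hm₂).aestronglyMeasurable hg_bound
  calc μ[f * g|m]
      =ᵐ[μ] μ[μ[f * g|m₂]|m] := (condExp_condExp_of_le hm hm₂).symm
    _ =ᵐ[μ] μ[μ[f|m] * g|m] := condExp_congr_ae h_pull_inner
    _ =ᵐ[μ] μ[f|m] * μ[g|m] :=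
      condExp_mul_of_stronglyMeasurable_left stronglyMeasurable_condExp h_int hg_int

end MeasureTheory

/-- If `m ⊆ σ(X)` and for every Borel set `B ⊆ ℝ^s` one has
`E[1_B∘Y | σ(X)] = E[1_B∘Y | m]` a.e., then `Y` and `X` are conditionally independent
given `m`. -/
theorem condIndep_of_condexp_indicator_eq
    {Ω : Type*} {p s : ℕ} [mΩ : MeasurableSpace Ω] [StandardBorelSpace Ω]
    (P : Measure Ω) [IsProbabilityMeasure P]
    (X : Ω → EuclideanSpace ℝ (Fin p)) (Y : Ω → EuclideanSpace ℝ (Fin s))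
    (hX : Measurable X) (hY : Measurable Y)
    (m : MeasurableSpace Ω) (hm : m ≤ MeasurableSpace.comap X inferInstance)
    (hcond : ∀ B : Set (EuclideanSpace ℝ (Fin s)), MeasurableSet B →
      P[(fun ω => B.indicator (fun _ => (1 : ℝ)) (Y ω))|MeasurableSpace.comap X inferInstance]
        =ᵐ[P] P[(fun ω => B.indicator (fun _ => (1 : ℝ)) (Y ω))|m]) :
    CondIndep m (MeasurableSpace.comap Y inferInstance) (MeasurableSpace.comap X inferInstance)
      (hm.trans hX.comap_le) P := by
  rw [condIndep_iff _ _ _ _ hY.comap_le hX.comap_le]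
  rintro _ t ⟨B, hB, rfl⟩ ht
  have h_bound : ∀ᵐ ω ∂P, ‖t.indicator (fun _ => (1 : ℝ)) ω‖ ≤ 1 :=
    .of_forall fun ω => (norm_indicator_le_norm_self _ ω).trans (by simp)
  rw [← Pi.one_def, Set.inter_indicator_one]
  exact condExp_mul_ae_eq_mul_condExp_of_condExp_ae_eq hm hX.comap_le
    ((integrable_const 1).indicator (hY hB)) (hcond B hB)
    (stronglyMeasurable_const.indicator ht) h_bound
end

section
/- Let m₀ ⊆ m ⊆ σ(X) be sub-σ-algebras of 𝒜. If Y and X are conditionally independent given m₀, then Y and X are conditionally independent given m. (In particular, if S₀ ⊆ S are subspaces of ℝ^p and S₀ is a dimension reduction subspace, i.e., Y and X are conditionally independent given σ(P_{S₀}∘X), then S is also a dimension reduction subspace.) -/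
/-!
When the conditioning σ-algebra `m` lies inside `m₂`, conditional independence of `m₁` and `m₂`
given `m` says exactly that `P⟦t | m₂⟧ = P⟦t | m⟧` for every `t ∈ m₁`. Given `m₀ ≤ m ≤ σ(X)`,
the hypothesis yields `P⟦t | σ(X)⟧ = P⟦t | m₀⟧`; conditioning both sides on the intermediate `m`
(tower property) gives `P⟦t | m⟧ = P⟦t | m₀⟧` as well, hence `P⟦t | σ(X)⟧ = P⟦t | m⟧`.
-/

open MeasureTheory ProbabilityTheory

lemma Set.mul_indicator_one_eq_indicator {α M₀ : Type*} [MulZeroOneClass M₀] (s : Set α)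
    (g : α → M₀) : g * s.indicator (fun _ ↦ 1) = s.indicator g := by
  ext a
  by_cases ha : a ∈ s <;> simp [ha]

namespace ProbabilityTheory

variable {Ω : Type*} {m m₁ m₂ mΩ : MeasurableSpace Ω} {μ : Measure Ω} [IsFiniteMeasure μ]

lemma condExp_ae_eq_of_le_of_condExp_ae_eq {E : Type*} [NormedAddCommGroup E] [NormedSpace ℝ E]
    [CompleteSpace E] {f : Ω → E} (h₁ : m ≤ m₁) (h₁₂ : m₁ ≤ m₂) (h₂ : m₂ ≤ mΩ)
    (h : μ[f | m₂] =ᵐ[μ] μ[f | m]) : μ[f | m₁] =ᵐ[μ] μ[f | m] := calc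
  μ[f | m₁] =ᵐ[μ] μ[μ[f | m₂] | m₁] := (condExp_condExp_of_le h₁₂ h₂).symm
  _ =ᵐ[μ] μ[μ[f | m] | m₁] := condExp_congr_ae h
  _ = μ[f | m] := condExp_of_stronglyMeasurable (h₁₂.trans h₂)
    (stronglyMeasurable_condExp.mono h₁) integrable_condExp

lemma setIntegral_eq_integral_mul_condExp_indicator (hm : m ≤ mΩ) {g : Ω → ℝ}
    (hg : StronglyMeasurable[m] g) (hgi : Integrable g μ) {u : Set Ω} (hu : MeasurableSet u) :
    ∫ ω in u, g ω ∂μ = ∫ ω, g ω * (μ⟦u | m⟧) ω ∂μ := by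
  have hgu : Integrable (g * u.indicator (fun _ ↦ 1)) μ := by
    rw [Set.mul_indicator_one_eq_indicator]
    exact hgi.indicator hu
  calc ∫ ω in u, g ω ∂μ = ∫ ω, (μ[g * u.indicator (fun _ ↦ 1) | m]) ω ∂μ := by
        rw [integral_condExp hm, Set.mul_indicator_one_eq_indicator, integral_indicator hu]
    _ = ∫ ω, g ω * (μ⟦u | m⟧) ω ∂μ := integral_congr_ae
        (condExp_mul_of_stronglyMeasurable_left hg hgu ((integrable_const 1).indicator hu))

variable [StandardBorelSpace Ω]

lemma CondIndep.condExp_indicator_ae_eq (hm : m ≤ m₂) (hm₁ : m₁ ≤ mΩ) (hm₂ : m₂ ≤ mΩ)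
    (h : CondIndep m m₁ m₂ (hm.trans hm₂) μ) {t : Set Ω} (ht : MeasurableSet[m₁] t) :
    μ⟦t | m₂⟧ =ᵐ[μ] μ⟦t | m⟧ := by
  have hm' := hm.trans hm₂
  refine (ae_eq_condExp_of_forall_setIntegral_eq hm₂ ((integrable_const 1).indicator (hm₁ t ht))
    (fun _ _ _ ↦ integrable_condExp.integrableOn) (fun u hu _ ↦ ?_)
    (stronglyMeasurable_condExp.mono hm).aestronglyMeasurable).symm
  rw [condIndep_iff _ _ _ hm' hm₁ hm₂] at h
  calc ∫ ω in u, (μ⟦t | m⟧) ω ∂μ = ∫ ω, (μ⟦t | m⟧) ω * (μ⟦u | m⟧) ω ∂μ :=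
        setIntegral_eq_integral_mul_condExp_indicator hm' stronglyMeasurable_condExp
          integrable_condExp (hm₂ u hu)
    _ = ∫ ω, (μ⟦t ∩ u | m⟧) ω ∂μ := (integral_congr_ae (h t u ht hu)).symm
    _ = ∫ ω in u, t.indicator (fun _ ↦ (1 : ℝ)) ω ∂μ := by
        rw [integral_condExp hm', ← integral_indicator (hm₂ u hu), Set.indicator_indicator,
          Set.inter_comm]

lemma condIndep_of_forall_condExp_indicator_ae_eq (hm : m ≤ m₂) (hm₁ : m₁ ≤ mΩ)
    (hm₂ : m₂ ≤ mΩ) (h : ∀ t, MeasurableSet[m₁] t → μ⟦t | m₂⟧ =ᵐ[μ] μ⟦t | m⟧) :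
    CondIndep m m₁ m₂ (hm.trans hm₂) μ := by
  rw [condIndep_iff _ _ _ (hm.trans hm₂) hm₁ hm₂]
  intro t₁ t₂ ht₁ ht₂
  have hint : Integrable (μ⟦t₁ | m⟧ * t₂.indicator (fun _ ↦ 1)) μ := by
    rw [Set.mul_indicator_one_eq_indicator]
    exact integrable_condExp.indicator (hm₂ t₂ ht₂)
  have h_inner : μ⟦t₁ ∩ t₂ | m₂⟧ =ᵐ[μ] μ⟦t₁ | m⟧ * t₂.indicator (fun _ ↦ 1) := by
    rw [Set.mul_indicator_one_eq_indicator, Set.inter_comm, ← Set.indicator_indicator]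
    refine (condExp_indicator ((integrable_const 1).indicator (hm₁ t₁ ht₁)) ht₂).trans ?_
    filter_upwards [h t₁ ht₁] with ω hω
    by_cases hω₂ : ω ∈ t₂ <;> simp [hω₂, hω]
  calc μ⟦t₁ ∩ t₂ | m⟧ =ᵐ[μ] μ[μ⟦t₁ ∩ t₂ | m₂⟧ | m] := (condExp_condExp_of_le hm hm₂).symm
    _ =ᵐ[μ] μ[μ⟦t₁ | m⟧ * t₂.indicator (fun _ ↦ 1) | m] := condExp_congr_ae h_inner
    _ =ᵐ[μ] μ⟦t₁ | m⟧ * μ⟦t₂ | m⟧ := condExp_mul_of_stronglyMeasurable_left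
        stronglyMeasurable_condExp hint ((integrable_const 1).indicator (hm₂ t₂ ht₂))

lemma condIndep_iff_forall_condExp_indicator_ae_eq (hm : m ≤ m₂) (hm₁ : m₁ ≤ mΩ)
    (hm₂ : m₂ ≤ mΩ) : CondIndep m m₁ m₂ (hm.trans hm₂) μ ↔
      ∀ t, MeasurableSet[m₁] t → μ⟦t | m₂⟧ =ᵐ[μ] μ⟦t | m⟧ :=
  ⟨fun h _ ↦ h.condExp_indicator_ae_eq hm hm₁ hm₂,
    condIndep_of_forall_condExp_indicator_ae_eq hm hm₁ hm₂⟩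

end ProbabilityTheory

/-- If `m₀ ⊆ m ⊆ σ(X)` and `Y` and `X` are conditionally independent given `m₀`, then `Y`
and `X` are conditionally independent given `m`. -/
theorem condIndep_mono
    {Ω : Type*} {p s : ℕ} [mΩ : MeasurableSpace Ω] [StandardBorelSpace Ω]
    (P : Measure Ω) [IsProbabilityMeasure P]
    (X : Ω → EuclideanSpace ℝ (Fin p)) (Y : Ω → EuclideanSpace ℝ (Fin s))
    (hX : Measurable X) (hY : Measurable Y)
    (m₀ m : MeasurableSpace Ω) (h0 : m₀ ≤ m) (hm : m ≤ MeasurableSpace.comap X inferInstance)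
    (hCI : CondIndep m₀ (MeasurableSpace.comap Y inferInstance)
      (MeasurableSpace.comap X inferInstance) ((h0.trans hm).trans hX.comap_le) P) :
    CondIndep m (MeasurableSpace.comap Y inferInstance)
      (MeasurableSpace.comap X inferInstance) (hm.trans hX.comap_le) P := by
  rw [condIndep_iff_forall_condExp_indicator_ae_eq hm hY.comap_le hX.comap_le]
  intro t ht
  have h₀ := hCI.condExp_indicator_ae_eq (h0.trans hm) hY.comap_le hX.comap_le ht
  exact h₀.trans (condExp_ae_eq_of_le_of_condExp_ae_eq h0 hm hX.comap_le h₀).symm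
end
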